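/- arXiv:2108.11786 — 3 statements merged into one kernel-verified Lean document; each statement's English description precedes it below -/
import Mathlib

section
/- Let K be a strict bicategory with objects a and b and 1-cells f : b ⟶ a and u : a ⟶ b. A 2-cell ε : u ≫ f ⟶ 𝟙 a defines an absolute right lifting of the identity 1-cell 𝟙 a through f (with lift u) if and only if there exists a 2-cell η : 𝟙 b ⟶ f ≫ u such that η and ε satisfy the triangle identities, i.e., (η, ε) exhibit an adjunction f ⊣ u in K with unit η and counit ε. -/
/-!
An adjunction `f ⊣ u` with counit `ε₀` turns pasting with `ε₀` into a bijection
`(b' ⟶ c' ≫ u) ≃ (b' ≫ f ⟶ c' ≫ 𝟙 a)`: it is the inverse of the transposition of 2-cells along the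
adjunction. Conversely, if `ε₀` is an absolute right lifting of `𝟙 a` through `f`, let the unit `η`
be the factorization of the identity of `f` through `ε₀`; this is the first triangle identity. The
second one follows from uniqueness of factorizations: by the first identity and the interchange
law, both `(ρ_ u).inv ≫ rightZigzag η ε₀` and `(λ_ u).inv` paste with `ε₀` to the same 2-cell.
-/

open CategoryTheory Bicategory

universe w v u

variable {K : Type u} [Bicategory.{w, v} K] [Bicategory.Strict K]

/-- In a strict bicategory `K`, the pair `(r, ρ)` is an absolute right lifting of `g` through
`f` if every 2-cell `χ : b' ≫ f ⟶ c' ≫ g` factors uniquely through `ρ`. -/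
def IsAbsoluteRightLifting {a b c : K} (f : b ⟶ a) (g : c ⟶ a) (r : c ⟶ b)
    (ρ : r ≫ f ⟶ g) : Prop :=
  ∀ (x : K) (b' : x ⟶ b) (c' : x ⟶ c) (χ : b' ≫ f ⟶ c' ≫ g),
    ∃! ζ : b' ⟶ c' ≫ r,
      χ = (ζ ▷ f) ≫ eqToHom (Bicategory.Strict.assoc c' r f) ≫ (c' ◁ ρ)

namespace CategoryTheory.Bicategory

variable {B : Type u} [Bicategory.{w, v} B]

def IsAbsRightLift {a b c : B} {f : b ⟶ a} {g : c ⟶ a} {r : c ⟶ b} (ρ : r ≫ f ⟶ g) : Prop :=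
  ∀ ⦃x : B⦄ (b' : x ⟶ b) (c' : x ⟶ c),
    Function.Bijective fun ζ : b' ⟶ c' ≫ r => ζ ▷ f ≫ (α_ c' r f).hom ≫ c' ◁ ρ

variable {a b : B} {f : b ⟶ a} {u : a ⟶ b}

theorem leftZigzag_eq (η : 𝟙 b ⟶ f ≫ u) (ε₀ : u ≫ f ⟶ 𝟙 a) :
    leftZigzag η ε₀ = η ▷ f ≫ (α_ f u f).hom ≫ f ◁ ε₀ := by
  bicategory

theorem rightZigzag_eq (η : 𝟙 b ⟶ f ≫ u) (ε₀ : u ≫ f ⟶ 𝟙 a) :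
    rightZigzag η ε₀ = u ◁ η ≫ (α_ u f u).inv ≫ ε₀ ▷ u := by
  bicategory

theorem Adjunction.isAbsRightLift_counit (adj : f ⊣ u) : IsAbsRightLift adj.counit := by
  intro x b' c'
  convert (adj.homEquiv₂.symm.trans ((Iso.refl _).homCongr (ρ_ c').symm)).bijective using 1
  ext ζ
  simp [Adjunction.homEquiv₂_symm_apply]

theorem IsAbsRightLift.exists_leftZigzag_eq {ε₀ : u ≫ f ⟶ 𝟙 a} (H : IsAbsRightLift ε₀) :
    ∃ η : 𝟙 b ⟶ f ≫ u, leftZigzag η ε₀ = (λ_ f).hom ≫ (ρ_ f).inv := by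
  obtain ⟨η, hη⟩ := (H (𝟙 b) f).surjective ((λ_ f).hom ≫ (ρ_ f).inv)
  exact ⟨η, by rw [leftZigzag_eq, ← hη]⟩

theorem IsAbsRightLift.right_triangle {η : 𝟙 b ⟶ f ≫ u} {ε₀ : u ≫ f ⟶ 𝟙 a}
    (H : IsAbsRightLift ε₀) (left : leftZigzag η ε₀ = (λ_ f).hom ≫ (ρ_ f).inv) :
    rightZigzag η ε₀ = (ρ_ u).hom ≫ (λ_ u).inv := by
  rw [← Iso.inv_comp_eq]
  apply H u (𝟙 a) |>.injective
  calc ((ρ_ u).inv ≫ rightZigzag η ε₀) ▷ f ≫ (α_ (𝟙 a) u f).hom ≫ 𝟙 a ◁ ε₀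
      = 𝟙 _ ⊗≫ u ◁ (η ▷ f) ⊗≫ (ε₀ ▷ (u ≫ f) ≫ 𝟙 a ◁ ε₀) ⊗≫ 𝟙 _ := by
        bicategory
    _ = 𝟙 _ ⊗≫ u ◁ (η ▷ f) ⊗≫ ((u ≫ f) ◁ ε₀ ≫ ε₀ ▷ 𝟙 a) ⊗≫ 𝟙 _ := by
        rw [whisker_exchange]
    _ = 𝟙 _ ⊗≫ u ◁ leftZigzag η ε₀ ⊗≫ ε₀ ▷ 𝟙 a ⊗≫ 𝟙 _ := by
        bicategory
    _ = (λ_ u).inv ▷ f ≫ (α_ (𝟙 a) u f).hom ≫ 𝟙 a ◁ ε₀ := by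
        rw [left]
        bicategory

theorem isAbsRightLift_iff_exists_adjunction {ε₀ : u ≫ f ⟶ 𝟙 a} :
    IsAbsRightLift ε₀ ↔ ∃ adj : f ⊣ u, adj.counit = ε₀ := by
  constructor
  · intro H
    obtain ⟨η, left⟩ := H.exists_leftZigzag_eq
    exact ⟨⟨η, ε₀, left, H.right_triangle left⟩, rfl⟩
  · rintro ⟨adj, rfl⟩
    exact adj.isAbsRightLift_counit

end CategoryTheory.Bicategory

theorem isAbsoluteRightLifting_iff_isAbsRightLift {a b c : K} (f : b ⟶ a) (g : c ⟶ a)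
    (r : c ⟶ b) (ρ : r ≫ f ⟶ g) : IsAbsoluteRightLifting f g r ρ ↔ IsAbsRightLift ρ := by
  simp only [IsAbsoluteRightLifting, IsAbsRightLift, Function.bijective_iff_existsUnique,
    Strict.associator_eqToIso, eqToIso.hom, eq_comm]

namespace CategoryTheory.Bicategory.Strict

theorem leftZigzag_eq_iff {a b : K} {f : b ⟶ a} {u : a ⟶ b}
    (η : 𝟙 b ⟶ f ≫ u) (ε₀ : u ≫ f ⟶ 𝟙 a) :
    leftZigzag η ε₀ = (λ_ f).hom ≫ (ρ_ f).inv ↔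
      eqToHom (Bicategory.Strict.id_comp f).symm ≫ (η ▷ f) ≫
        eqToHom (Bicategory.Strict.assoc f u f) ≫ (f ◁ ε₀) ≫
        eqToHom (Bicategory.Strict.comp_id f) = 𝟙 f := by
  rw [leftZigzag_eq, ← Iso.inv_comp_eq, ← Iso.comp_hom_eq_id]
  simp [associator_eqToIso, leftUnitor_eqToIso, rightUnitor_eqToIso]

theorem rightZigzag_eq_iff {a b : K} {f : b ⟶ a} {u : a ⟶ b}
    (η : 𝟙 b ⟶ f ≫ u) (ε₀ : u ≫ f ⟶ 𝟙 a) :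
    rightZigzag η ε₀ = (ρ_ u).hom ≫ (λ_ u).inv ↔
      eqToHom (Bicategory.Strict.comp_id u).symm ≫ (u ◁ η) ≫
        eqToHom (Bicategory.Strict.assoc u f u).symm ≫ (ε₀ ▷ u) ≫
        eqToHom (Bicategory.Strict.id_comp u) = 𝟙 u := by
  rw [rightZigzag_eq, ← Iso.inv_comp_eq, ← Iso.comp_hom_eq_id]
  simp [associator_eqToIso, leftUnitor_eqToIso, rightUnitor_eqToIso]

end CategoryTheory.Bicategory.Strict

/-- A 2-cell `ε : u ≫ f ⟶ 𝟙 a` defines an absolute right lifting of the identity `𝟙 a`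
through `f` (with lift `u`) if and only if there is a unit `η : 𝟙 b ⟶ f ≫ u` so that
`(η, ε)` satisfy the triangle identities, i.e. exhibit an adjunction `f ⊣ u`. -/
theorem isAbsoluteRightLifting_id_iff_adjunction {a b : K} (f : b ⟶ a) (u : a ⟶ b)
    (ε₀ : u ≫ f ⟶ 𝟙 a) :
    IsAbsoluteRightLifting f (𝟙 a) u ε₀ ↔
      ∃ η : 𝟙 b ⟶ f ≫ u,
        (eqToHom (Bicategory.Strict.id_comp f).symm ≫ (η ▷ f) ≫
            eqToHom (Bicategory.Strict.assoc f u f) ≫ (f ◁ ε₀) ≫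
            eqToHom (Bicategory.Strict.comp_id f) = 𝟙 f) ∧
        (eqToHom (Bicategory.Strict.comp_id u).symm ≫ (u ◁ η) ≫
            eqToHom (Bicategory.Strict.assoc u f u).symm ≫ (ε₀ ▷ u) ≫
            eqToHom (Bicategory.Strict.id_comp u) = 𝟙 u) := by
  rw [isAbsoluteRightLifting_iff_isAbsRightLift, isAbsRightLift_iff_exists_adjunction]
  constructor
  · rintro ⟨adj, rfl⟩
    exact ⟨adj.unit, (Strict.leftZigzag_eq_iff _ _).1 adj.left_triangle,
      (Strict.rightZigzag_eq_iff _ _).1 adj.right_triangle⟩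
  · rintro ⟨η, left, right⟩
    exact ⟨⟨η, ε₀, (Strict.leftZigzag_eq_iff _ _).2 left,
      (Strict.rightZigzag_eq_iff _ _).2 right⟩, rfl⟩
end

section
/- Let A be a strict bicategory and t an object of A. The following are equivalent: (1) there is a family of 1-cells η_a : a ⟶ t, one for each object a of A, such that η_t = 𝟙 t, such that f ≫ η_b = η_a for every 1-cell f : a ⟶ b, and such that for every 2-cell θ : f ⟶ g between 1-cells f, g : a ⟶ b, the whiskering θ ▷ η_b is the identity 2-cell modulo the equalities f ≫ η_b = η_a = g ≫ η_b (i.e., (θ ▷ η_b) ≫ eqToHom (g ≫ η_b = η_a) = eqToHom (f ≫ η_b = η_a)); (2) for every object a of A there is exactly one 1-cell from a to t, and for every 1-cell f : a ⟶ t, every 2-cell θ : f ⟶ f equals 𝟙 f. (Condition (1) is the unpacking of the statement that the unique 2-functor A → 1 admits a right 2-adjoint picking out t; condition (2) says t is a 2-terminal object, i.e., each hom-category into t is isomorphic to the terminal category.) -/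
set_option linter.unnecessarySimpa false


open CategoryTheory Bicategory

universe w v u

/-- For an object `t` of a strict bicategory `A`, the existence of a strictly 2-natural
family of 1-cells `η_a : a ⟶ t` (the counit of a 2-adjunction exhibiting `t` as a right
2-adjoint to the unique 2-functor `A → 1`) is equivalent to `t` being 2-terminal: every
object admits exactly one 1-cell into `t`, and every endo-2-cell of such a 1-cell is the
identity. -/
theorem twoAdjoint_terminal_iff_twoTerminal {A : Type u} [Bicategory.{w, v} A]
    [Bicategory.Strict A] (t : A) :
    (∃ η : ∀ a : A, a ⟶ t,
      η t = 𝟙 t ∧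
      ∃ hcomp : ∀ {a b : A} (f : a ⟶ b), f ≫ η b = η a,
        ∀ {a b : A} {f g : a ⟶ b} (θ : f ⟶ g),
          (θ ▷ η b) ≫ eqToHom (hcomp g) = eqToHom (hcomp f)) ↔
    ((∀ a : A, ∃! _ : a ⟶ t, True) ∧
      (∀ (a : A) (f : a ⟶ t) (θ : f ⟶ f), θ = 𝟙 f)) := by
  constructor
  · rintro ⟨η, hη, hcomp, hθ⟩
    have huniq : ∀ {a : A} (f : a ⟶ t), f = η a := by
      intro a f
      have := hcomp f
      rw [hη, Category.comp_id] at this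
      exact this
    constructor
    · intro a
      exact ⟨η a, trivial, fun f _ => huniq f⟩
    · intro a f θ
      obtain ⟨e, he, h1⟩ : ∃ e : t ⟶ t, e = 𝟙 t ∧ θ ▷ e = 𝟙 (f ≫ e) :=
        ⟨η t, hη, by simpa [comp_eqToHom_iff] using hθ θ⟩
      subst he
      have nat : θ ▷ 𝟙 t ≫ (ρ_ f).hom = (ρ_ f).hom ≫ θ := by
        simpa using (ρ_ f).hom.naturality θ
      rw [h1, Category.id_comp] at nat
      exact ((Iso.cancel_iso_hom_left (ρ_ f) θ (𝟙 f)).mp (by simpa using nat.symm))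
  · rintro ⟨h1, h2⟩
    refine ⟨fun a => (h1 a).choose, ?_, ?_⟩
    · exact ((h1 t).choose_spec.2 (𝟙 t) trivial).symm
    · have hc : ∀ {a b : A} (f : a ⟶ b), f ≫ (h1 b).choose = (h1 a).choose :=
        fun {a b} f => ((h1 a).choose_spec.2 _ trivial)
      refine ⟨hc, ?_⟩
      intro a b f g θ
      have key : (θ ▷ (h1 b).choose) ≫ eqToHom (hc g) ≫ eqToHom (hc f).symm
          = 𝟙 (f ≫ (h1 b).choose) := h2 a _ _
      calc (θ ▷ (h1 b).choose) ≫ eqToHom (hc g)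
          = ((θ ▷ (h1 b).choose) ≫ eqToHom (hc g) ≫ eqToHom (hc f).symm) ≫ eqToHom (hc f) := by
            simp
        _ = eqToHom (hc f) := by rw [key, Category.id_comp]
end

section
/- Let J and A be categories, D : J ⥤ A a functor, ℓ an object of A, and λ : (Functor.const J).obj ℓ ⟶ D a natural transformation (a cone over D with apex ℓ). Then the cone with point ℓ and legs given by the components of λ is a limit cone for D if and only if the following absolute right lifting property holds: for every category X, every functor B : X ⥤ A, and every natural transformation χ : B ⋙ Functor.const J ⟶ (Functor.const X).obj D (between functors X ⥤ (J ⥤ A)), there exists a unique natural transformation ζ : B ⟶ (Functor.const X).obj ℓ such that χ is the composite of the whiskering of ζ with Functor.const J : A ⥤ (J ⥤ A) followed by the natural transformation (Functor.const X).obj ((Functor.const J).obj ℓ) ⟶ (Functor.const X).obj D whose component at every object of X is λ. -/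
open CategoryTheory CategoryTheory.Limits

universe v₁ v₂ v₃ u₁ u₂ u₃

/-! A transformation `χ : B ⋙ Δ ⟶ Δ_X D` is an `X`-indexed family of cones `χ.app x` over `D`
with apex `B.obj x`, natural in `x`. If `(ℓ, λ)` is a limit cone, the lifts of these cones form the
unique factorization `ζ`, natural by uniqueness of lifts. Conversely, testing the lifting property
on a constant functor `B` out of a category with one object recovers the universal property of the
limit. -/

namespace CategoryTheory.Limits

variable {J : Type u₁} [Category.{v₁} J] {A : Type u₂} [Category.{v₂} A]
  {D : J ⥤ A} {ℓ : A} {lam : (Functor.const J).obj ℓ ⟶ D}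
  {X : Type u₃} [Category.{v₃} X]

lemma eq_whiskerRight_const_comp_map_iff {B : X ⥤ A}
    (χ : B ⋙ Functor.const J ⟶ (Functor.const X).obj D) (ζ : B ⟶ (Functor.const X).obj ℓ) :
    χ = Functor.whiskerRight ζ (Functor.const J) ≫ (Functor.const X).map lam ↔
      ∀ x j, ζ.app x ≫ lam.app j = (χ.app x).app j := by
  constructor
  · rintro rfl x j
    simp
  · intro h
    ext x j
    simp [h]

namespace IsLimit

variable (h : IsLimit (⟨ℓ, lam⟩ : Cone D))

@[simp]
lemma lift_comp_app (s : Cone D) (j : J) : h.lift s ≫ lam.app j = s.π.app j :=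
  h.fac s j

@[simps]
def liftNatTrans {B : X ⥤ A} (χ : B ⋙ Functor.const J ⟶ (Functor.const X).obj D) :
    B ⟶ (Functor.const X).obj ℓ where
  app x := h.lift ⟨B.obj x, χ.app x⟩
  naturality x y f := h.hom_ext fun j => by
    simpa using NatTrans.congr_app (χ.naturality f) j

include h in
lemma existsUnique_eq_whiskerRight_const_comp_map {B : X ⥤ A}
    (χ : B ⋙ Functor.const J ⟶ (Functor.const X).obj D) :
    ∃! ζ : B ⟶ (Functor.const X).obj ℓ,
      χ = Functor.whiskerRight ζ (Functor.const J) ≫ (Functor.const X).map lam := by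
  refine ⟨h.liftNatTrans χ,
    (eq_whiskerRight_const_comp_map_iff _ _).2 fun x j => h.lift_comp_app _ j,
    fun ζ hζ => ?_⟩
  have hζ_fac := (eq_whiskerRight_const_comp_map_iff χ ζ).1 hζ
  ext x
  exact h.hom_ext fun j => by simp [hζ_fac]

end IsLimit

noncomputable def IsLimit.ofExistsUniqueEqWhiskerRightConstCompMap (x₀ : X)
    (H : ∀ (B : X ⥤ A) (χ : B ⋙ Functor.const J ⟶ (Functor.const X).obj D),
      ∃! ζ : B ⟶ (Functor.const X).obj ℓ,
        χ = Functor.whiskerRight ζ (Functor.const J) ≫ (Functor.const X).map lam) :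
    IsLimit (⟨ℓ, lam⟩ : Cone D) :=
  IsLimit.ofExistsUnique fun s => by
    obtain ⟨ζ, hζ, hζ_uniq⟩ :=
      H _ ((Functor.constComp X s.pt (Functor.const J)).hom ≫ (Functor.const X).map s.π)
    rw [eq_whiskerRight_const_comp_map_iff] at hζ
    refine ⟨ζ.app x₀, fun j => by simpa using hζ x₀ j, fun m hm => ?_⟩
    have hmζ : (Functor.const X).map m = ζ :=
      hζ_uniq _ ((eq_whiskerRight_const_comp_map_iff _ _).2 fun x j => by simpa using hm j)
    exact NatTrans.congr_app hmζ x₀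

end CategoryTheory.Limits

/-- A cone `λ : Δℓ ⟶ D` over a diagram `D : J ⥤ A` is a limit cone if and only if
`(ℓ, λ)` is an absolute right lifting of `D` through the constant-diagram functor
`Functor.const J : A ⥤ (J ⥤ A)`: every natural transformation
`χ : B ⋙ Functor.const J ⟶ Δ_X D` factors uniquely through `λ`. -/
theorem isLimit_iff_absoluteRightLifting {J : Type u₁} [Category.{v₁} J]
    {A : Type u₂} [Category.{v₂} A] (D : J ⥤ A) (ℓ : A)
    (lam : (Functor.const J).obj ℓ ⟶ D) :
    Nonempty (IsLimit (⟨ℓ, lam⟩ : Cone D)) ↔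
      ∀ (X : Type u₃) (_ : Category.{v₃} X) (B : X ⥤ A)
        (χ : B ⋙ Functor.const J ⟶ (Functor.const X).obj D),
        ∃! ζ : B ⟶ (Functor.const X).obj ℓ,
          χ = CategoryTheory.Functor.whiskerRight ζ (Functor.const J) ≫
            (Functor.const X).map lam := by
  constructor
  · rintro ⟨h⟩ X _ B χ
    exact h.existsUnique_eq_whiskerRight_const_comp_map χ
  · intro H
    -- a one-object category with objects in `Type u₃` and morphisms in `Type v₃`
    exact ⟨IsLimit.ofExistsUniqueEqWhiskerRightConstCompMap
      (X := ULiftHom.{v₃} (Codiscrete PUnit.{u₃ + 1})) ⟨⟨⟩⟩ (H _ inferInstance)⟩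
end
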